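/- arXiv:1507.03731 — 2 statements merged into one kernel-verified Lean document; each statement's English description precedes it below -/
import Mathlib

section
/- Let a discrete network be given, let each numerical Hamiltonian g_{j,k} satisfy (G1) (monotonicity) and (G3) (C¹ regularity), and let V be a grid function that is continuous at vertices. Then for every ρ>0 there exists a grid function U, continuous at vertices, such that −ν_j(D²_hU)_{j,k} + g_{j,k}([D_hU]_{j,k}) + ρU_{j,k} = V_{j,k} for all j∈J and 1≤k≤N_j−1, and S^h(U, V−ρU)_i = 0 for every vertex i∈I; moreover any such solution satisfies ‖U‖_∞ ≤ (max_{j,k}|g_{j,k}(0,0)| + ‖V‖_∞)/ρ. -/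
open scoped BigOperators Classical

/-- A discrete network: finite index sets of vertices `I` and edges `J`,
diffusion coefficients, number of subintervals, grid steps, and the vertices
attached to the endpoints `k = 0` and `k = N j` of each edge. -/
structure Net (I J : Type) where
  nu : J → ℝ
  N : J → ℕ
  h : J → ℝ
  a : J → I
  b : J → I
  nu_pos : ∀ j, 0 < nu j
  N_ge : ∀ j, 2 ≤ N j
  h_pos : ∀ j, 0 < h j

namespace Net

variable {I J : Type} [Fintype I] [Fintype J] [Nonempty I] [Nonempty J]

/-- Forward difference quotient `(D⁺U)_{j,k}`. -/
noncomputable def Dp (net : Net I J) (U : J → ℕ → ℝ) (j : J) (k : ℕ) : ℝ :=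
  (U j (k + 1) - U j k) / net.h j

/-- Discrete gradient `[D_hU]_{j,k} = ((D⁺U)_{j,k}, (D⁺U)_{j,k-1})`. -/
noncomputable def Dh (net : Net I J) (U : J → ℕ → ℝ) (j : J) (k : ℕ) : ℝ × ℝ :=
  (net.Dp U j k, net.Dp U j (k - 1))

/-- Discrete second derivative `(D²_hU)_{j,k}`. -/
noncomputable def D2 (net : Net I J) (U : J → ℕ → ℝ) (j : J) (k : ℕ) : ℝ :=
  (U j (k - 1) - 2 * U j k + U j (k + 1)) / (net.h j) ^ 2

/-- A grid function is continuous at vertices if its endpoint values depend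
only on the attached vertex. -/
def Cont (net : Net I J) (U : J → ℕ → ℝ) : Prop :=
  (∀ j j', net.a j = net.a j' → U j 0 = U j' 0) ∧
  (∀ j j', net.b j = net.b j' → U j (net.N j) = U j' (net.N j')) ∧
  (∀ j j', net.a j = net.b j' → U j 0 = U j' (net.N j'))

/-- The maximum norm `‖U‖_∞ = max_{j, 0 ≤ k ≤ N j} |U_{j,k}|`. -/
noncomputable def supnorm (net : Net I J) (U : J → ℕ → ℝ) : ℝ :=
  Finset.univ.sup' Finset.univ_nonempty fun j =>
    (Finset.range (net.N j + 1)).sup'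
      (Finset.nonempty_range_iff.mpr (Nat.succ_ne_zero _)) fun k => |U j k|

/-- `max_{j, 0 ≤ k ≤ N j - 1} |(D⁺U)_{j,k}|`. -/
noncomputable def supDp (net : Net I J) (U : J → ℕ → ℝ) : ℝ :=
  Finset.univ.sup' Finset.univ_nonempty fun j =>
    (Finset.range (net.N j)).sup'
      (Finset.nonempty_range_iff.mpr (by have := net.N_ge j; omega)) fun k =>
        |net.Dp U j k|

/-- `max_{j∈J, 1 ≤ k ≤ N j - 1} |g_{j,k}(0,0)|`. -/
noncomputable def gmax (net : Net I J) (g : J → ℕ → ℝ × ℝ → ℝ) : ℝ :=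
  Finset.univ.sup' Finset.univ_nonempty fun j =>
    (Finset.Icc 1 (net.N j - 1)).sup'
      (Finset.nonempty_Icc.mpr (by have := net.N_ge j; omega)) fun k => |g j k (0, 0)|

/-- The discrete Kirchhoff operator `S^h(U,V)_i`. -/
noncomputable def S (net : Net I J) (U V : J → ℕ → ℝ) (i : I) : ℝ :=
  (∑ j, if net.a j = i then net.nu j * net.Dp U j 0 + net.h j / 2 * V j 0 else 0) -
  (∑ j, if net.b j = i then
      net.nu j * net.Dp U j (net.N j - 1) - net.h j / 2 * V j (net.N j) else 0)

/-- The scalar product `(U,W)₂` of grid functions. -/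
noncomputable def inner2 (net : Net I J) (U W : J → ℕ → ℝ) : ℝ :=
  (∑ j, ∑ k ∈ Finset.Ico 1 (net.N j), net.h j * U j k * W j k) +
  ∑ i, ((∑ j, if net.a j = i then net.h j / 2 * U j 0 * W j 0 else 0) +
        (∑ j, if net.b j = i then
            net.h j / 2 * U j (net.N j) * W j (net.N j) else 0))

/-- The convex compact set `K_h` of discrete probability densities. -/
def Kh (net : Net I J) : Set (J → ℕ → ℝ) :=
  {M | net.Cont M ∧ (∀ j k, k ≤ net.N j → 0 ≤ M j k) ∧
     net.inner2 M (fun _ _ => 1) = 1}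

end Net

/-- Partial derivative `∂_{q₁}g` of a numerical Hamiltonian. -/
noncomputable def dq1 (g : ℝ × ℝ → ℝ) (q : ℝ × ℝ) : ℝ := fderiv ℝ g q (1, 0)

/-- Partial derivative `∂_{q₂}g` of a numerical Hamiltonian. -/
noncomputable def dq2 (g : ℝ × ℝ → ℝ) (q : ℝ × ℝ) : ℝ := fderiv ℝ g q (0, 1)

/-- (G1): `g` is nonincreasing in `q₁` and nondecreasing in `q₂`. -/
def G1 (g : ℝ × ℝ → ℝ) : Prop :=
  (∀ q₁ q₁' q₂ : ℝ, q₁ ≤ q₁' → g (q₁', q₂) ≤ g (q₁, q₂)) ∧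
  (∀ q₁ q₂ q₂' : ℝ, q₂ ≤ q₂' → g (q₁, q₂) ≤ g (q₁, q₂'))

/-- (G4): superlinear growth `g(q₁,q₂) ≥ α((q₁⁻)²+(q₂⁺)²)^{γ/2} - C₀'`. -/
def G4 (g : ℝ × ℝ → ℝ) (α C₀' γ : ℝ) : Prop :=
  ∀ q : ℝ × ℝ,
    α * ((max (-q.1) 0) ^ 2 + (max q.2 0) ^ 2) ^ (γ / 2) - C₀' ≤ g q

namespace Net

variable {I J : Type} [Fintype I] [Fintype J] [Nonempty I] [Nonempty J]

/-- The discrete transport operator `B^h(U,M)_{j,k}` (for `1 ≤ k ≤ N j - 1`),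
omitting the `k-1` term when `k = 1` and the `k+1` term when `k = N j - 1`. -/
noncomputable def B (net : Net I J) (g : J → ℕ → ℝ × ℝ → ℝ)
    (U M : J → ℕ → ℝ) (j : J) (k : ℕ) : ℝ :=
  (1 / net.h j) *
    ((M j k * dq1 (g j k) (net.Dh U j k) -
        if k = 1 then 0 else M j (k - 1) * dq1 (g j (k - 1)) (net.Dh U j (k - 1))) +
     ((if k = net.N j - 1 then 0
        else M j (k + 1) * dq2 (g j (k + 1)) (net.Dh U j (k + 1))) -
        M j k * dq2 (g j k) (net.Dh U j k)))

/-- The discrete transition operator `T^h(M,U)_i` for the Fokker–Planck equation. -/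
noncomputable def T (net : Net I J) (g : J → ℕ → ℝ × ℝ → ℝ)
    (M U : J → ℕ → ℝ) (i : I) : ℝ :=
  (∑ j, if net.a j = i then
      net.nu j * net.Dp M j 0 + M j 1 * dq2 (g j 1) (net.Dh U j 1) else 0) -
  (∑ j, if net.b j = i then
      net.nu j * net.Dp M j (net.N j - 1) +
        M j (net.N j - 1) * dq1 (g j (net.N j - 1)) (net.Dh U j (net.N j - 1))
    else 0)

/-- The discrete Mean Field Games system. -/
def MFG (net : Net I J) (g : J → ℕ → ℝ × ℝ → ℝ)
    (Vh : (J → ℕ → ℝ) → J → ℕ → ℝ) (U M : J → ℕ → ℝ) (Λ : ℝ) : Prop :=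
  (∀ j k, 1 ≤ k → k ≤ net.N j - 1 →
      -net.nu j * net.D2 U j k + g j k (net.Dh U j k) + Λ = Vh M j k) ∧
  (∀ j k, 1 ≤ k → k ≤ net.N j - 1 →
      net.nu j * net.D2 M j k + net.B g U M j k = 0) ∧
  (∀ i, net.S U (fun j k => Vh M j k - Λ) i = 0) ∧
  (∀ i, net.T g M U i = 0) ∧
  net.Cont U ∧ M ∈ net.Kh ∧ net.inner2 U (fun _ _ => 1) = 0

/-- The perturbed discrete Mean Field Games system with residuals `A`, `B'`. -/
def pertMFG (net : Net I J) (g : J → ℕ → ℝ × ℝ → ℝ)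
    (Vh : (J → ℕ → ℝ) → J → ℕ → ℝ) (A B' : J → ℕ → ℝ)
    (Ub Mb : J → ℕ → ℝ) (Λb : ℝ) : Prop :=
  (∀ j k, 1 ≤ k → k ≤ net.N j - 1 →
      -net.nu j * net.D2 Ub j k + g j k (net.Dh Ub j k) + Λb = Vh Mb j k + A j k) ∧
  (∀ j k, 1 ≤ k → k ≤ net.N j - 1 →
      net.nu j * net.D2 Mb j k + net.B g Ub Mb j k = B' j k) ∧
  (∀ i, net.S Ub (fun j k => Vh Mb j k - Λb) i =
      (∑ j, if net.a j = i then net.h j / 2 * A j 0 else 0) +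
      (∑ j, if net.b j = i then net.h j / 2 * A j (net.N j) else 0)) ∧
  (∀ i, net.T g Mb Ub i =
      (∑ j, if net.a j = i then net.h j / 2 * B' j 0 else 0) +
      (∑ j, if net.b j = i then net.h j / 2 * B' j (net.N j) else 0)) ∧
  net.Cont Ub ∧ Mb ∈ net.Kh ∧ net.inner2 Ub (fun _ _ => 1) = 0

/-- The quantity `R^h(M,U,Ū)` appearing in the fundamental identity. -/
noncomputable def Rfun (net : Net I J) (g : J → ℕ → ℝ × ℝ → ℝ)
    (M U Ub : J → ℕ → ℝ) : ℝ :=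
  ∑ j, ∑ k ∈ Finset.Ico 1 (net.N j), net.h j * M j k *
    (g j k (net.Dh Ub j k) - g j k (net.Dh U j k) -
      ((net.Dp Ub j k - net.Dp U j k) * dq1 (g j k) (net.Dh U j k) +
       (net.Dp Ub j (k - 1) - net.Dp U j (k - 1)) * dq2 (g j k) (net.Dh U j k)))

/-- Continuous piecewise linear reconstruction `I^h(M)` of a grid function on an edge. -/
noncomputable def interp (net : Net I J) (M : J → ℕ → ℝ) (j : J) (t : ℝ) : ℝ :=
  M j ⌊t / net.h j⌋₊ +
    (t / net.h j - ⌊t / net.h j⌋₊) * (M j (⌊t / net.h j⌋₊ + 1) - M j ⌊t / net.h j⌋₊)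

end Net

/-!
Write the scheme as `Φ x = 0`, with one unknown per vertex and per interior node and `Φ p` the
Kirchhoff defect or the discrete equation at `p`. By (G1), `Φ p` is nonincreasing in every unknown
other than `x p`, and by (G3) it is Lipschitz in `x p` on bounded sets, so `x ↦ x - Φ x / M` is
monotone on the box `[-C, C]`, `C = (max |g(0,0)| + ‖V‖) / ρ`. The constants `∓C` are a sub- and a
supersolution, so the box is invariant and the Knaster–Tarski theorem gives a fixed point.

The bound is the discrete maximum principle: at a maximum of `U` the discrete equation (interior
node) or the Kirchhoff condition (vertex) forces `ρ max U ≤ max |g(0,0)| + ‖V‖`. The minimum is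
handled by applying this to `-U`, which solves the scheme for `q ↦ -g (-q)` and `-V`.
-/

open Finset

theorem exists_eq_zero_of_oneSidedLipschitz {ι : Type*} (Φ : (ι → ℝ) → ι → ℝ) {lo hi : ι → ℝ}
    (hlohi : lo ≤ hi)
    (hΦ : ∀ p, ∃ L : ℝ, ∀ x ∈ Set.Icc lo hi, ∀ y ∈ Set.Icc lo hi, x ≤ y →
      Φ y p - Φ x p ≤ L * (y p - x p))
    (hlo : ∀ p, Φ lo p ≤ 0) (hhi : ∀ p, 0 ≤ Φ hi p) :
    ∃ x, Φ x = 0 := by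
  choose L hL using hΦ
  -- `x ↦ x - Φ x / M` is monotone on the box once `M ≥ L`, and it maps `lo`, `hi` inwards
  set M : ι → ℝ := fun p => max (L p) 1
  have hM : ∀ p, 0 < M p := fun p => lt_max_of_lt_right one_pos
  set T : (ι → ℝ) → ι → ℝ := fun x p => x p - Φ x p / M p
  have hT_mono : ∀ x ∈ Set.Icc lo hi, ∀ y ∈ Set.Icc lo hi, x ≤ y → T x ≤ T y := by
    intro x hx y hy hxy p
    have hLM : Φ y p - Φ x p ≤ M p * (y p - x p) :=
      (hL p x hx y hy hxy).trans (by gcongr; exacts [sub_nonneg.2 (hxy p), le_max_left _ _])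
    have : Φ y p / M p - Φ x p / M p ≤ y p - x p := by
      rw [← sub_div, div_le_iff₀ (hM p)]; linarith
    simp only [T]; linarith
  have hT_lo : lo ≤ T lo := fun p => by
    simpa [T] using div_nonpos_of_nonpos_of_nonneg (hlo p) (hM p).le
  have hT_hi : T hi ≤ hi := fun p => by
    simpa [T] using div_nonneg (hhi p) (hM p).le
  have hT_mem : ∀ x ∈ Set.Icc lo hi, T x ∈ Set.Icc lo hi := fun x hx =>
    ⟨hT_lo.trans (hT_mono lo ⟨le_rfl, hlohi⟩ x hx hx.1),
      (hT_mono x hx hi ⟨hlohi, le_rfl⟩ hx.2).trans hT_hi⟩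
  have : Fact (lo ≤ hi) := ⟨hlohi⟩
  let F : Set.Icc lo hi →o Set.Icc lo hi :=
    ⟨fun x => ⟨T x, hT_mem x x.2⟩, fun x y hxy => hT_mono x x.2 y y.2 hxy⟩
  refine ⟨F.lfp, funext fun p => ?_⟩
  have hfix := congrFun (congrArg Subtype.val F.map_lfp) p
  change T (F.lfp : ι → ℝ) p = (F.lfp : ι → ℝ) p at hfix
  simp only [T, sub_eq_self, div_eq_zero_iff] at hfix
  exact hfix.resolve_right (hM p).ne'

theorem G1.apply_le_apply {g : ℝ × ℝ → ℝ} (hg : G1 g) {p₁ p₂ q₁ q₂ : ℝ} (h₁ : p₁ ≤ q₁)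
    (h₂ : q₂ ≤ p₂) : g (q₁, q₂) ≤ g (p₁, p₂) :=
  (hg.2 q₁ q₂ p₂ h₂).trans (hg.1 p₁ q₁ p₂ h₁)

theorem G1.neg_comp_neg {g : ℝ × ℝ → ℝ} (hg : G1 g) : G1 fun q => -g (-q) :=
  ⟨fun _ _ _ h => neg_le_neg (hg.1 _ _ _ (neg_le_neg h)),
    fun _ _ _ h => neg_le_neg (hg.2 _ _ _ (neg_le_neg h))⟩

theorem G1.mul_le_sub_of_threePoint {g : ℝ × ℝ → ℝ} (hg : G1 g) {ν h ρ u₀ u₁ u₂ v : ℝ}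
    (hν : 0 ≤ ν) (hh : 0 < h) (h₀ : u₀ ≤ u₁) (h₂ : u₂ ≤ u₁)
    (heq : -ν * ((u₀ - 2 * u₁ + u₂) / h ^ 2) + g ((u₂ - u₁) / h, (u₁ - u₀) / h) + ρ * u₁ = v) :
    ρ * u₁ ≤ v - g (0, 0) := by
  have hg0 : g (0, 0) ≤ g ((u₂ - u₁) / h, (u₁ - u₀) / h) :=
    G1.apply_le_apply hg (div_nonpos_of_nonpos_of_nonneg (by linarith) hh.le)
      (div_nonneg (by linarith) hh.le)
  have hdiff : 0 ≤ -ν * ((u₀ - 2 * u₁ + u₂) / h ^ 2) :=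
    mul_nonneg_of_nonpos_of_nonpos (by linarith) (div_nonpos_of_nonpos_of_nonneg (by linarith)
      (by positivity))
  linarith

theorem G1.threePoint_sub_le {g : ℝ × ℝ → ℝ} (hg : G1 g) {K : NNReal} {ν h ρ C : ℝ}
    (hν : 0 ≤ ν) (hh : 0 < h) (hK : LipschitzOnWith K g (Metric.closedBall 0 (2 * C / h)))
    {u₀ u₁ u₂ w₀ w₁ w₂ : ℝ} (hu₀ : |u₀| ≤ C) (hu₁ : |u₁| ≤ C) (hu₂ : |u₂| ≤ C) (hw₁ : |w₁| ≤ C)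
    (h₀ : u₀ ≤ w₀) (h₁ : u₁ ≤ w₁) (h₂ : u₂ ≤ w₂) :
    (-ν * ((w₀ - 2 * w₁ + w₂) / h ^ 2) + g ((w₂ - w₁) / h, (w₁ - w₀) / h) + ρ * w₁) -
        (-ν * ((u₀ - 2 * u₁ + u₂) / h ^ 2) + g ((u₂ - u₁) / h, (u₁ - u₀) / h) + ρ * u₁) ≤
      (2 * ν / h ^ 2 + K / h + ρ) * (w₁ - u₁) := by
  have hmono : g ((w₂ - w₁) / h, (w₁ - w₀) / h) ≤ g ((u₂ - w₁) / h, (w₁ - u₀) / h) :=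
    G1.apply_le_apply hg (by gcongr) (by gcongr)
  have hquot : ∀ s t : ℝ, |s| ≤ C → |t| ≤ C → ‖(s - t) / h‖ ≤ 2 * C / h := fun s t hs ht => by
    rw [Real.norm_eq_abs, abs_div, abs_of_pos hh]
    gcongr
    linarith [abs_sub s t]
  have hball : ∀ a b c : ℝ, |a| ≤ C → |b| ≤ C → |c| ≤ C →
      ((a - b) / h, (b - c) / h) ∈ Metric.closedBall (0 : ℝ × ℝ) (2 * C / h) :=
    fun a b c ha hb hc => by
      rw [mem_closedBall_zero_iff, Prod.norm_def]
      exact max_le (hquot a b ha hb) (hquot b c hb hc)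
  have hdist : dist ((u₂ - w₁) / h, (w₁ - u₀) / h) ((u₂ - u₁) / h, (u₁ - u₀) / h) =
      (w₁ - u₁) / h := by
    have e₁ : (u₂ - w₁) / h - (u₂ - u₁) / h = -((w₁ - u₁) / h) := by ring
    have e₂ : (w₁ - u₀) / h - (u₁ - u₀) / h = (w₁ - u₁) / h := by ring
    have hnn : 0 ≤ (w₁ - u₁) / h := div_nonneg (by linarith) hh.le
    rw [Prod.dist_eq, Real.dist_eq, Real.dist_eq, e₁, e₂, abs_neg, abs_of_nonneg hnn, max_self]
  have hlip : g ((u₂ - w₁) / h, (w₁ - u₀) / h) - g ((u₂ - u₁) / h, (u₁ - u₀) / h) ≤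
      K / h * (w₁ - u₁) := by
    have := hK.dist_le_mul _ (hball u₂ w₁ u₀ hu₂ hw₁ hu₀) _ (hball u₂ u₁ u₀ hu₂ hu₁ hu₀)
    rw [hdist, Real.dist_eq] at this
    calc _ ≤ _ := le_abs_self _
      _ ≤ _ := this
      _ = K / h * (w₁ - u₁) := by ring
  have hlap : -ν * ((w₀ - 2 * w₁ + w₂) / h ^ 2) - -ν * ((u₀ - 2 * u₁ + u₂) / h ^ 2) =
      2 * ν / h ^ 2 * (w₁ - u₁) - ν / h ^ 2 * ((w₀ - u₀) + (w₂ - u₂)) := by ring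
  have hpos : 0 ≤ ν / h ^ 2 * ((w₀ - u₀) + (w₂ - u₂)) :=
    mul_nonneg (by positivity) (by linarith)
  linarith

namespace Net

variable {I J : Type} (net : Net I J)

theorem Dp_neg (U : J → ℕ → ℝ) (j : J) (k : ℕ) : net.Dp (-U) j k = -net.Dp U j k := by
  simp only [Dp, Pi.neg_apply]; ring

theorem Dh_neg (U : J → ℕ → ℝ) (j : J) (k : ℕ) : net.Dh (-U) j k = -net.Dh U j k := by
  simp only [Dh, Dp_neg, Prod.neg_mk]

theorem D2_neg (U : J → ℕ → ℝ) (j : J) (k : ℕ) : net.D2 (-U) j k = -net.D2 U j k := by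
  simp only [D2, Pi.neg_apply]; ring

theorem Dh_of_pos (U : J → ℕ → ℝ) (j : J) {k : ℕ} (hk : 1 ≤ k) :
    net.Dh U j k = ((U j (k + 1) - U j k) / net.h j, (U j k - U j (k - 1)) / net.h j) := by
  simp only [Dh, Dp, Nat.sub_add_cancel hk]

theorem Cont.neg {net : Net I J} {U : J → ℕ → ℝ} (hU : net.Cont U) : net.Cont (-U) :=
  ⟨fun j j' h => by simp [hU.1 j j' h], fun j j' h => by simp [hU.2.1 j j' h],
    fun j j' h => by simp [hU.2.2 j j' h]⟩

theorem S_neg [Fintype J] (U W : J → ℕ → ℝ) (i : I) : net.S (-U) (-W) i = -net.S U W i := by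
  simp only [S, Dp_neg, Pi.neg_apply]
  rw [neg_sub, sub_eq_add_neg, sub_eq_neg_add, ← sum_neg_distrib, ← sum_neg_distrib]
  congr 1 <;> refine sum_congr rfl fun j _ => ?_ <;> split_ifs <;> ring

section Norms

variable [Fintype J] [Nonempty J]

theorem abs_le_supnorm (U : J → ℕ → ℝ) {j : J} {k : ℕ} (hk : k ≤ net.N j) :
    |U j k| ≤ net.supnorm U :=
  (le_sup' (fun k => |U j k|) (mem_range.2 (Nat.lt_succ_of_le hk))).trans
    (le_sup' (fun j => (range (net.N j + 1)).sup' _ fun k => |U j k|) (mem_univ j))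

theorem supnorm_le {U : J → ℕ → ℝ} {c : ℝ} (h : ∀ j k, k ≤ net.N j → |U j k| ≤ c) :
    net.supnorm U ≤ c :=
  sup'_le _ _ fun j _ => sup'_le _ _ fun k hk => h j k (Nat.le_of_lt_succ (mem_range.1 hk))

theorem supnorm_nonneg (U : J → ℕ → ℝ) : 0 ≤ net.supnorm U :=
  (abs_nonneg _).trans (net.abs_le_supnorm U (j := Classical.arbitrary J) (Nat.zero_le _))

theorem supnorm_neg (U : J → ℕ → ℝ) : net.supnorm (-U) = net.supnorm U := by
  simp only [supnorm, Pi.neg_apply, abs_neg]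

theorem abs_le_gmax (g : J → ℕ → ℝ × ℝ → ℝ) {j : J} {k : ℕ} (hk₁ : 1 ≤ k)
    (hk₂ : k ≤ net.N j - 1) : |g j k (0, 0)| ≤ net.gmax g :=
  (le_sup' (fun k => |g j k (0, 0)|) (mem_Icc.2 ⟨hk₁, hk₂⟩)).trans
    (le_sup' (fun j => (Icc 1 (net.N j - 1)).sup' _ fun k => |g j k (0, 0)|) (mem_univ j))

theorem gmax_nonneg (g : J → ℕ → ℝ × ℝ → ℝ) : 0 ≤ net.gmax g :=
  (abs_nonneg _).trans (net.abs_le_gmax g (j := Classical.arbitrary J) le_rfl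
    (Nat.le_sub_one_of_lt (net.N_ge _)))

theorem gmax_neg (g : J → ℕ → ℝ × ℝ → ℝ) :
    net.gmax (fun j k q => -g j k (-q)) = net.gmax g := by
  simp only [gmax, Prod.neg_mk, neg_zero, abs_neg]

end Norms

/-- The grid function with value `x (inl i)` at the endpoints attached to vertex `i` and
`x (inr (j, k))` at the interior node `k` of edge `j`; coordinates `inr (j, k)` with `k = 0` or
`N j ≤ k` are ignored. -/
noncomputable def ofNodes (x : I ⊕ J × ℕ → ℝ) : J → ℕ → ℝ := fun j k =>
  if k = 0 then x (.inl (net.a j)) else if net.N j ≤ k then x (.inl (net.b j)) else x (.inr (j, k))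

theorem ofNodes_zero (x : I ⊕ J × ℕ → ℝ) (j : J) : net.ofNodes x j 0 = x (.inl (net.a j)) :=
  if_pos rfl

theorem ofNodes_N (x : I ⊕ J × ℕ → ℝ) (j : J) :
    net.ofNodes x j (net.N j) = x (.inl (net.b j)) := by
  rw [ofNodes, if_neg (by have := net.N_ge j; omega), if_pos le_rfl]

theorem ofNodes_of_interior (x : I ⊕ J × ℕ → ℝ) {j : J} {k : ℕ} (hk₁ : 1 ≤ k)
    (hk₂ : k ≤ net.N j - 1) : net.ofNodes x j k = x (.inr (j, k)) := by
  rw [ofNodes, if_neg (by omega), if_neg (by have := net.N_ge j; omega)]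

theorem cont_ofNodes (x : I ⊕ J × ℕ → ℝ) : net.Cont (net.ofNodes x) :=
  ⟨fun j j' h => by simp only [ofNodes_zero, h], fun j j' h => by simp only [ofNodes_N, h],
    fun j j' h => by simp only [ofNodes_zero, ofNodes_N, h]⟩

theorem ofNodes_mem_range (x : I ⊕ J × ℕ → ℝ) (j : J) (k : ℕ) :
    net.ofNodes x j k ∈ Set.range x := by
  unfold ofNodes; split_ifs <;> exact Set.mem_range_self _

theorem ofNodes_mono {x y : I ⊕ J × ℕ → ℝ} (hxy : x ≤ y) (j : J) (k : ℕ) :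
    net.ofNodes x j k ≤ net.ofNodes y j k := by
  unfold ofNodes; split_ifs <;> apply hxy

theorem ofNodes_const (c : ℝ) : net.ofNodes (fun _ => c) = fun _ _ => c := by
  funext j k; unfold ofNodes; split_ifs <;> rfl

/-- The vertex residual is `-S`, so that every residual is increasing in its own unknown;
coordinates `inr (j, k)` that are not interior nodes have residual `0`. -/
noncomputable def residual [Fintype J] (g : J → ℕ → ℝ × ℝ → ℝ) (V : J → ℕ → ℝ) (ρ : ℝ)
    (U : J → ℕ → ℝ) : I ⊕ J × ℕ → ℝ
  | .inl i => -net.S U (fun j k => V j k - ρ * U j k) i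
  | .inr (j, k) =>
    if 1 ≤ k ∧ k ≤ net.N j - 1 then
      -net.nu j * net.D2 U j k + g j k (net.Dh U j k) + ρ * U j k - V j k
    else 0

section Residual

variable [Fintype J] {g : J → ℕ → ℝ × ℝ → ℝ} {V : J → ℕ → ℝ} {ρ : ℝ}

theorem residual_eq_zero_iff {U : J → ℕ → ℝ} :
    net.residual g V ρ U = 0 ↔
      (∀ j k, 1 ≤ k → k ≤ net.N j - 1 →
        -net.nu j * net.D2 U j k + g j k (net.Dh U j k) + ρ * U j k = V j k) ∧
      ∀ i, net.S U (fun j k => V j k - ρ * U j k) i = 0 := by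
  constructor
  · intro h
    refine ⟨fun j k hk₁ hk₂ => ?_, fun i => ?_⟩
    · have := congrFun h (.inr (j, k))
      simp only [residual, if_pos (And.intro hk₁ hk₂), Pi.zero_apply] at this
      linarith
    · simpa [residual] using congrFun h (.inl i)
  · rintro ⟨heq, hS⟩
    funext p
    rcases p with i | ⟨j, k⟩
    · simp [residual, hS i]
    · simp only [residual, Pi.zero_apply]
      split_ifs with hk
      · linarith [heq j k hk.1 hk.2]
      · rfl

theorem residual_neg (U : J → ℕ → ℝ) :
    net.residual (fun j k q => -g j k (-q)) (-V) ρ (-U) = -net.residual g V ρ U := by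
  funext p
  rcases p with i | ⟨j, k⟩
  · have hW : (fun j k => (-V) j k - ρ * (-U) j k) = -fun j k => V j k - ρ * U j k := by
      funext j k; simp only [Pi.neg_apply]; ring
    simp only [residual]
    rw [hW, S_neg]
    rfl
  · simp only [residual, D2_neg, Dh_neg, neg_neg, Pi.neg_apply]
    split_ifs <;> ring

theorem residual_const_nonneg [Nonempty J] {c : ℝ} (hc : net.gmax g + net.supnorm V ≤ ρ * c)
    (p : I ⊕ J × ℕ) : 0 ≤ net.residual g V ρ (fun _ _ => c) p := by
  have hV : ∀ j k, k ≤ net.N j → V j k ≤ ρ * c := fun j k hk =>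
    (le_abs_self _).trans ((net.abs_le_supnorm V hk).trans (by linarith [net.gmax_nonneg g]))
  rcases p with i | ⟨j, k⟩
  · have hend : ∀ j k, k ≤ net.N j → net.h j / 2 * (V j k - ρ * c) ≤ 0 := fun j k hk =>
      mul_nonpos_of_nonneg_of_nonpos (half_pos (net.h_pos j)).le (sub_nonpos.2 (hV j k hk))
    simp only [residual, S, Dp, sub_self, zero_div, mul_zero, zero_add, zero_sub, neg_sub]
    refine sub_nonneg.2 ((sum_nonpos fun j _ => ?_).trans (sum_nonneg fun j _ => ?_)) <;>
      split_ifs <;> linarith [hend j 0 (Nat.zero_le _), hend j _ le_rfl]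
  · simp only [residual, D2, Dh, Dp]
    split_ifs with hk
    · have := net.abs_le_gmax g hk.1 hk.2
      have := (le_abs_self _).trans (net.abs_le_supnorm V (j := j) (k := k) (by omega))
      simp only [sub_self, zero_div, (by ring : c - 2 * c + c = 0), mul_zero, zero_add]
      linarith [neg_abs_le (g j k (0, 0))]
    · exact le_rfl

theorem residual_const_nonpos [Nonempty J] {c : ℝ} (hc : net.gmax g + net.supnorm V ≤ ρ * c)
    (p : I ⊕ J × ℕ) : net.residual g V ρ (fun _ _ => -c) p ≤ 0 := by
  have h := net.residual_const_nonneg (g := fun j k q => -g j k (-q)) (V := -V)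
    (by rwa [gmax_neg, supnorm_neg]) p
  have e := congrFun (net.residual_neg (g := fun j k q => -g j k (-q)) (V := -V) (ρ := ρ)
    fun _ _ => c) p
  simp only [neg_neg] at e
  change net.residual g V ρ (-fun _ _ => c) p ≤ 0
  rw [e, Pi.neg_apply]
  exact neg_nonpos.2 h

theorem S_sub_S_le {U W : J → ℕ → ℝ} (hUW : ∀ j k, U j k ≤ W j k) (i : I) {d : ℝ}
    (ha : ∀ j, net.a j = i → W j 0 = U j 0 + d)
    (hb : ∀ j, net.b j = i → W j (net.N j) = U j (net.N j) + d) :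
    net.S U (fun j k => V j k - ρ * U j k) i - net.S W (fun j k => V j k - ρ * W j k) i ≤
      (∑ j, ((if net.a j = i then net.nu j / net.h j + ρ * net.h j / 2 else 0) +
        (if net.b j = i then net.nu j / net.h j + ρ * net.h j / 2 else 0))) * d := by
  -- every edge end at `i`, of either kind, contributes a difference of this form
  have hend : ∀ j (u w u' w' v : ℝ), w = u + d → u' ≤ w' →
      net.nu j * ((u' - u) / net.h j) + net.h j / 2 * (v - ρ * u) -
        (net.nu j * ((w' - w) / net.h j) + net.h j / 2 * (v - ρ * w)) ≤
      (net.nu j / net.h j + ρ * net.h j / 2) * d := by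
    rintro j u _ u' w' v rfl hu'
    calc _ = (net.nu j / net.h j + ρ * net.h j / 2) * d - net.nu j / net.h j * (w' - u') := by
          ring
      _ ≤ _ := sub_le_self _ <|
          mul_nonneg (div_nonneg (net.nu_pos j).le (net.h_pos j).le) (sub_nonneg.2 hu')
  simp only [S]
  rw [sub_sub_sub_comm, ← sum_sub_distrib, ← sum_sub_distrib, ← sum_sub_distrib, sum_mul]
  refine sum_le_sum fun j _ => ?_
  have hN : net.N j - 1 + 1 = net.N j := Nat.sub_add_cancel (by linarith [net.N_ge j])
  rw [add_mul, sub_eq_add_neg]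
  gcongr
  · split_ifs with h
    · exact hend j _ _ _ _ _ (ha j h) (hUW j 1)
    · simp
  · split_ifs with h
    · simp only [Dp, hN]
      exact le_of_eq_of_le (by ring) (hend j _ _ _ _ _ (hb j h) (hUW j (net.N j - 1)))
    · simp

theorem exists_residual_ofNodes_sub_le_inl (i : I) :
    ∃ L, ∀ x y : I ⊕ J × ℕ → ℝ, x ≤ y →
      net.residual g V ρ (net.ofNodes y) (.inl i) - net.residual g V ρ (net.ofNodes x) (.inl i) ≤
        L * (y (.inl i) - x (.inl i)) := by
  refine ⟨∑ j, ((if net.a j = i then net.nu j / net.h j + ρ * net.h j / 2 else 0) +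
    (if net.b j = i then net.nu j / net.h j + ρ * net.h j / 2 else 0)), fun x y hxy => ?_⟩
  have := net.S_sub_S_le (V := V) (ρ := ρ) (net.ofNodes_mono hxy) i (d := y (.inl i) - x (.inl i))
    (fun j h => by simp only [ofNodes_zero, h]; ring) (fun j h => by simp only [ofNodes_N, h]; ring)
  simp only [residual]
  linarith

theorem exists_residual_ofNodes_sub_le_inr (hg1 : ∀ j k, 1 ≤ k → k ≤ net.N j - 1 → G1 (g j k))
    (hg3 : ∀ j k, 1 ≤ k → k ≤ net.N j - 1 → ContDiff ℝ 1 (g j k)) (C : ℝ) (j : J) (k : ℕ) :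
    ∃ L, ∀ x y : I ⊕ J × ℕ → ℝ, (∀ q, |x q| ≤ C) → (∀ q, |y q| ≤ C) → x ≤ y →
      net.residual g V ρ (net.ofNodes y) (.inr (j, k)) -
          net.residual g V ρ (net.ofNodes x) (.inr (j, k)) ≤
        L * (y (.inr (j, k)) - x (.inr (j, k))) := by
  by_cases hk : 1 ≤ k ∧ k ≤ net.N j - 1
  · obtain ⟨K, hK⟩ := (hg3 j k hk.1 hk.2).locallyLipschitz.locallyLipschitzOn
      |>.exists_lipschitzOnWith_of_compact (isCompact_closedBall (0 : ℝ × ℝ) (2 * C / net.h j))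
    refine ⟨2 * net.nu j / net.h j ^ 2 + K / net.h j + ρ, fun x y hx hy hxy => ?_⟩
    have hbound : ∀ z : I ⊕ J × ℕ → ℝ, (∀ q, |z q| ≤ C) → ∀ k', |net.ofNodes z j k'| ≤ C :=
      fun z hz k' => by obtain ⟨q, hq⟩ := net.ofNodes_mem_range z j k'; exact hq ▸ hz q
    have := G1.threePoint_sub_le (hg1 j k hk.1 hk.2) (ρ := ρ) (net.nu_pos j).le (net.h_pos j) hK
      (hbound x hx (k - 1)) (hbound x hx k) (hbound x hx (k + 1)) (hbound y hy k)
      (net.ofNodes_mono hxy j (k - 1)) (net.ofNodes_mono hxy j k) (net.ofNodes_mono hxy j (k + 1))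
    simp only [residual, if_pos hk, D2, net.Dh_of_pos _ j hk.1]
    rw [← net.ofNodes_of_interior x hk.1 hk.2, ← net.ofNodes_of_interior y hk.1 hk.2]
    linarith
  · exact ⟨0, fun x y _ _ _ => by simp [residual, hk]⟩

theorem exists_residual_ofNodes_eq_zero [Nonempty J]
    (hg1 : ∀ j k, 1 ≤ k → k ≤ net.N j - 1 → G1 (g j k))
    (hg3 : ∀ j k, 1 ≤ k → k ≤ net.N j - 1 → ContDiff ℝ 1 (g j k)) (hρ : 0 < ρ) :
    ∃ x, net.residual g V ρ (net.ofNodes x) = 0 := by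
  -- the constants `±C` are a super- and a subsolution
  set C := (net.gmax g + net.supnorm V) / ρ
  have hρC : net.gmax g + net.supnorm V ≤ ρ * C := (mul_div_cancel₀ _ hρ.ne').ge
  have hC : 0 ≤ C := div_nonneg (add_nonneg (net.gmax_nonneg g) (net.supnorm_nonneg V)) hρ.le
  have hbox : ∀ x : I ⊕ J × ℕ → ℝ, x ∈ Set.Icc (fun _ => -C) (fun _ => C) →
      ∀ q, |x q| ≤ C :=
    fun x hx q => abs_le.2 ⟨hx.1 q, hx.2 q⟩
  refine exists_eq_zero_of_oneSidedLipschitz _ (fun _ => neg_le_self hC) ?_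
    (fun p => by simpa only [ofNodes_const] using net.residual_const_nonpos hρC p)
    (fun p => by simpa only [ofNodes_const] using net.residual_const_nonneg hρC p)
  rintro (i | ⟨j, k⟩)
  · obtain ⟨L, hL⟩ := net.exists_residual_ofNodes_sub_le_inl (g := g) (V := V) (ρ := ρ) i
    exact ⟨L, fun x _ y _ hxy => hL x y hxy⟩
  · obtain ⟨L, hL⟩ := net.exists_residual_ofNodes_sub_le_inr (V := V) (ρ := ρ) hg1 hg3 C j k
    exact ⟨L, fun x hx y hy hxy => hL x y (hbox x hx) (hbox y hy) hxy⟩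

theorem mul_le_supnorm_of_vertex_max [Nonempty J] {U : J → ℕ → ℝ} {M : ℝ} {i : I} {j₀ : J}
    (hj₀ : net.a j₀ = i ∨ net.b j₀ = i) (hmax : ∀ j k, k ≤ net.N j → U j k ≤ M)
    (ha : ∀ j, net.a j = i → U j 0 = M) (hb : ∀ j, net.b j = i → U j (net.N j) = M)
    (hS : net.S U (fun j k => V j k - ρ * U j k) i = 0) : ρ * M ≤ net.supnorm V := by
  by_contra! hlt
  have hV : ∀ j k, k ≤ net.N j → V j k - ρ * M < 0 := fun j k hk => by
    linarith [le_abs_self (V j k), net.abs_le_supnorm V hk]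
  -- at a maximum the fluxes into the edges are `≤ 0`, so every end attached to `i` counts `< 0`
  have hA : ∀ j, net.a j = i →
      net.nu j * net.Dp U j 0 + net.h j / 2 * (V j 0 - ρ * U j 0) < 0 := fun j h => by
    rw [Dp, zero_add, ha j h]
    have h₁ : U j 1 - M ≤ 0 := by linarith [hmax j 1 (by linarith [net.N_ge j])]
    have := mul_nonpos_of_nonneg_of_nonpos (net.nu_pos j).le
      (div_nonpos_of_nonpos_of_nonneg h₁ (net.h_pos j).le)
    have := mul_neg_of_pos_of_neg (half_pos (net.h_pos j)) (hV j 0 (Nat.zero_le _))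
    linarith
  have hB : ∀ j, net.b j = i →
      0 < net.nu j * net.Dp U j (net.N j - 1) - net.h j / 2 * (V j (net.N j) - ρ * U j (net.N j)) :=
      fun j h => by
    rw [Dp, Nat.sub_add_cancel (by linarith [net.N_ge j] : 1 ≤ net.N j), hb j h]
    have h₁ : 0 ≤ M - U j (net.N j - 1) := by linarith [hmax j (net.N j - 1) (Nat.sub_le _ _)]
    have := mul_nonneg (net.nu_pos j).le (div_nonneg h₁ (net.h_pos j).le)
    have := mul_neg_of_pos_of_neg (half_pos (net.h_pos j)) (hV j _ le_rfl)
    linarith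
  have hA' : ∀ j, (if net.a j = i then
      net.nu j * net.Dp U j 0 + net.h j / 2 * (V j 0 - ρ * U j 0) else 0) ≤ 0 := fun j => by
    split_ifs with h
    exacts [(hA j h).le, le_rfl]
  have hB' : ∀ j, 0 ≤ if net.b j = i then net.nu j * net.Dp U j (net.N j - 1) -
      net.h j / 2 * (V j (net.N j) - ρ * U j (net.N j)) else 0 := fun j => by
    split_ifs with h
    exacts [(hB j h).le, le_rfl]
  have hneg : net.S U (fun j k => V j k - ρ * U j k) i < 0 := by
    simp only [S]
    rw [← sum_sub_distrib]
    refine sum_neg' (fun j _ => by linarith [hA' j, hB' j]) ⟨j₀, mem_univ _, ?_⟩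
    rcases hj₀ with h | h
    · rw [if_pos h]; linarith [hA j₀ h, hB' j₀]
    · rw [if_pos h]; linarith [hA' j₀, hB j₀ h]
  exact hneg.ne hS

theorem mul_le_of_residual_eq_zero [Nonempty J]
    (hg1 : ∀ j k, 1 ≤ k → k ≤ net.N j - 1 → G1 (g j k)) (hρ : 0 ≤ ρ) {U : J → ℕ → ℝ}
    (hU : net.Cont U) (hres : net.residual g V ρ U = 0) {j : J} {k : ℕ} (hk : k ≤ net.N j) :
    ρ * U j k ≤ net.gmax g + net.supnorm V := by
  obtain ⟨heq, hS⟩ := net.residual_eq_zero_iff.mp hres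
  obtain ⟨⟨j₀, k₀⟩, hmem, hargmax⟩ := (univ.sigma fun j => range (net.N j + 1)).exists_max_image
    (fun p => U p.1 p.2) ⟨⟨j, k⟩, by simpa [Nat.lt_succ_iff] using hk⟩
  have hmax : ∀ j k, k ≤ net.N j → U j k ≤ U j₀ k₀ := fun j k hk =>
    hargmax ⟨j, k⟩ (by simpa [Nat.lt_succ_iff] using hk)
  have hk₀ : k₀ ≤ net.N j₀ := by simpa [Nat.lt_succ_iff] using hmem
  suffices ρ * U j₀ k₀ ≤ net.gmax g + net.supnorm V from
    (mul_le_mul_of_nonneg_left (hmax j k hk) hρ).trans this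
  have hgmax := net.gmax_nonneg g
  rcases Nat.eq_zero_or_pos k₀ with rfl | hpos
  · have := net.mul_le_supnorm_of_vertex_max (Or.inl rfl) hmax (fun j h => hU.1 j j₀ h)
      (fun j h => (hU.2.2 j₀ j h.symm).symm) (hS (net.a j₀))
    linarith
  rcases hk₀.eq_or_lt with rfl | hlt
  · have := net.mul_le_supnorm_of_vertex_max (Or.inr rfl) hmax (fun j h => hU.2.2 j j₀ h)
      (fun j h => hU.2.1 j j₀ h) (hS (net.b j₀))
    linarith
  have hk₂ : k₀ ≤ net.N j₀ - 1 := Nat.le_sub_one_of_lt hlt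
  have h := heq j₀ k₀ hpos hk₂
  rw [D2, net.Dh_of_pos U j₀ hpos] at h
  have := G1.mul_le_sub_of_threePoint (hg1 j₀ k₀ hpos hk₂) (net.nu_pos j₀).le (net.h_pos j₀)
    (hmax j₀ _ (by omega)) (hmax j₀ _ (by omega)) h
  linarith [neg_abs_le (g j₀ k₀ (0, 0)), net.abs_le_gmax g hpos hk₂,
    le_abs_self (V j₀ k₀), net.abs_le_supnorm V hk₀]

theorem abs_le_of_residual_eq_zero [Nonempty J]
    (hg1 : ∀ j k, 1 ≤ k → k ≤ net.N j - 1 → G1 (g j k)) (hρ : 0 < ρ) {U : J → ℕ → ℝ}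
    (hU : net.Cont U) (hres : net.residual g V ρ U = 0) {j : J} {k : ℕ} (hk : k ≤ net.N j) :
    |U j k| ≤ (net.gmax g + net.supnorm V) / ρ := by
  have hupper := net.mul_le_of_residual_eq_zero hg1 hρ.le hU hres hk
  -- `-U` solves the scheme for the Hamiltonians `q ↦ -g (-q)` and the data `-V`
  have hlower := net.mul_le_of_residual_eq_zero (g := fun j k q => -g j k (-q)) (V := -V)
    (fun j k hk₁ hk₂ => G1.neg_comp_neg (hg1 j k hk₁ hk₂)) hρ.le hU.neg
    (by rw [net.residual_neg, hres, neg_zero]) hk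
  rw [gmax_neg, supnorm_neg, Pi.neg_apply, Pi.neg_apply] at hlower
  rw [abs_le, ← neg_div, div_le_iff₀ hρ, le_div_iff₀ hρ]
  constructor <;> linarith

end Residual

end Net

theorem stmt_0_general {I J : Type} [Fintype J] [Nonempty J]
    (net : Net I J) (g : J → ℕ → ℝ × ℝ → ℝ)
    (hg1 : ∀ j k, 1 ≤ k → k ≤ net.N j - 1 → G1 (g j k))
    (hg3 : ∀ j k, 1 ≤ k → k ≤ net.N j - 1 → ContDiff ℝ 1 (g j k))
    (V : J → ℕ → ℝ) (ρ : ℝ) (hρ : 0 < ρ) :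
    (∃ U : J → ℕ → ℝ, net.Cont U ∧
      (∀ j k, 1 ≤ k → k ≤ net.N j - 1 →
        -net.nu j * net.D2 U j k + g j k (net.Dh U j k) + ρ * U j k = V j k) ∧
      (∀ i, net.S U (fun j k => V j k - ρ * U j k) i = 0)) ∧
    (∀ U : J → ℕ → ℝ, net.Cont U →
      (∀ j k, 1 ≤ k → k ≤ net.N j - 1 →
        -net.nu j * net.D2 U j k + g j k (net.Dh U j k) + ρ * U j k = V j k) →
      (∀ i, net.S U (fun j k => V j k - ρ * U j k) i = 0) →
      net.supnorm U ≤ (net.gmax g + net.supnorm V) / ρ) := by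
  refine ⟨?_, fun U hU heq hS => ?_⟩
  · obtain ⟨x, hx⟩ := net.exists_residual_ofNodes_eq_zero hg1 hg3 hρ
    exact ⟨net.ofNodes x, net.cont_ofNodes x, net.residual_eq_zero_iff.mp hx⟩
  · exact net.supnorm_le fun j k hk => net.abs_le_of_residual_eq_zero hg1 hρ hU
      (net.residual_eq_zero_iff.mpr ⟨heq, hS⟩) hk

/-- Existence and ‖·‖_∞ bound for the discrete ergodic
approximation of the Hamilton–Jacobi–Bellman equation on a network. -/
theorem stmt_0 {I J : Type} [Fintype I] [Fintype J] [Nonempty I] [Nonempty J]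
    (net : Net I J) (g : J → ℕ → ℝ × ℝ → ℝ)
    (hg1 : ∀ j k, 1 ≤ k → k ≤ net.N j - 1 → G1 (g j k))
    (hg3 : ∀ j k, 1 ≤ k → k ≤ net.N j - 1 → ContDiff ℝ 1 (g j k))
    (V : J → ℕ → ℝ) (hV : net.Cont V) (ρ : ℝ) (hρ : 0 < ρ) :
    (∃ U : J → ℕ → ℝ, net.Cont U ∧
      (∀ j k, 1 ≤ k → k ≤ net.N j - 1 →
        -net.nu j * net.D2 U j k + g j k (net.Dh U j k) + ρ * U j k = V j k) ∧
      (∀ i, net.S U (fun j k => V j k - ρ * U j k) i = 0)) ∧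
    (∀ U : J → ℕ → ℝ, net.Cont U →
      (∀ j k, 1 ≤ k → k ≤ net.N j - 1 →
        -net.nu j * net.D2 U j k + g j k (net.Dh U j k) + ρ * U j k = V j k) →
      (∀ i, net.S U (fun j k => V j k - ρ * U j k) i = 0) →
      net.supnorm U ≤ (net.gmax g + net.supnorm V) / ρ) :=
  stmt_0_general net g hg1 hg3 V ρ hρ
end

section
/- Fix the incidence data (I,J,a,b), diffusion coefficients ν_j>0, edge lengths l_j>0, constants α>0, C₀'∈ℝ, γ>1 for hypothesis (G4), and constants C₀>0, C_V>0. Then there exists a constant C (depending only on these data, and in particular not on the grid resolution) with the following property: for every choice of integers N_j≥3 with grid steps h_j=l_j/N_j, every family of numerical Hamiltonians g_{j,k} satisfying (G1), (G3) and (G4) with the constants α, C₀', γ, every grid function Ṽ continuous at vertices with ‖Ṽ‖_∞ ≤ C_V, and every grid function U, continuous at vertices, satisfying −ν_j(D²_hU)_{j,k} + g_{j,k}([D_hU]_{j,k}) = Ṽ_{j,k} for all j∈J, 1≤k≤N_j−1, S^h(U,Ṽ)_i = 0 for all i∈I, and ‖U‖_∞ ≤ C₀, one has max_{j∈J} max_{0≤k≤N_j−1}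 |(D⁺U)_{j,k}| ≤ C. -/
open scoped BigOperators Classical

/-!
On each edge, (G4) bounds `g` from below, so the Hamilton–Jacobi equation gives a one-sided bound
`D²_hU ≥ -c`: the slopes `D⁺U` can decrease by at most `h c` per grid step, hence by at most `l c`
along the whole edge. Since the mean slope is `(U_N - U_0)/l`, bounded by `2 C₀ / l`, this controls
the slope at the start of the edge from above and the slope at its end from below. The Kirchhoff
condition writes each flux at a vertex as a sum of fluxes bounded from the other side, which gives
the missing opposite endpoint bounds; the almost-monotonicity of the slopes then carries the two
endpoint bounds to every interior slope.
-/

open Finset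

section Kirchhoff

variable {ι : Type*} [Fintype ι] {p q : ι → Prop} [DecidablePred p] [DecidablePred q]
  {f e G : ι → ℝ}

theorem le_two_mul_sum_of_sum_ite_eq (hG : ∀ j, 0 ≤ G j) (hf : ∀ j, p j → f j ≤ G j)
    (he : ∀ j, q j → -G j ≤ e j)
    (hsum : ∑ j, (if p j then f j else 0) = ∑ j, (if q j then e j else 0))
    {j₀ : ι} (hj₀ : q j₀) : e j₀ ≤ 2 * ∑ j, G j := by
  have hf_sum : ∑ j, (if p j then f j else 0) ≤ ∑ j, G j :=
    sum_le_sum fun j _ => by split_ifs with hj; exacts [hf j hj, hG j]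
  have he_sum : -∑ j ∈ univ.erase j₀, G j ≤ ∑ j ∈ univ.erase j₀, (if q j then e j else 0) := by
    rw [← sum_neg_distrib]
    exact sum_le_sum fun j _ => by split_ifs with hj; exacts [he j hj, neg_nonpos.mpr (hG j)]
  have hG_erase : ∑ j ∈ univ.erase j₀, G j ≤ ∑ j, G j :=
    sum_le_sum_of_subset_of_nonneg (subset_univ _) fun j _ _ => hG j
  have hsplit := add_sum_erase univ (fun j => if q j then e j else 0) (mem_univ j₀)
  rw [if_pos hj₀] at hsplit
  linarith

theorem neg_two_mul_sum_le_of_sum_ite_eq (hG : ∀ j, 0 ≤ G j) (hf : ∀ j, p j → f j ≤ G j)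
    (he : ∀ j, q j → -G j ≤ e j)
    (hsum : ∑ j, (if p j then f j else 0) = ∑ j, (if q j then e j else 0))
    {j₀ : ι} (hj₀ : p j₀) : -(2 * ∑ j, G j) ≤ f j₀ := by
  have hsum_neg : ∑ j, (if q j then -e j else 0) = ∑ j, (if p j then -f j else 0) := by
    rw [← neg_inj]
    simp only [← sum_neg_distrib, neg_ite, neg_neg, neg_zero]
    exact hsum.symm
  have := le_two_mul_sum_of_sum_ite_eq (e := fun j => -f j) hG
    (fun j hj => by linarith [he j hj]) (fun j hj => by linarith [hf j hj]) hsum_neg hj₀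
  linarith

end Kirchhoff

theorem G4.neg_le {g : ℝ × ℝ → ℝ} {α C₀' γ : ℝ} (hg : G4 g α C₀' γ) (hα : 0 ≤ α) (q : ℝ × ℝ) :
    -C₀' ≤ g q := by
  have := hg q
  have : 0 ≤ α * ((max (-q.1) 0) ^ 2 + (max q.2 0) ^ 2) ^ (γ / 2) := by positivity
  linarith

namespace Net

variable {I J : Type} (net : Net I J) (U : J → ℕ → ℝ) (j : J)

theorem two_le_N_cast : (2 : ℝ) ≤ net.N j := by
  exact_mod_cast net.N_ge j

theorem N_mul_h_eq {l : ℝ} (hh : net.h j = l / net.N j) : (net.N j : ℝ) * net.h j = l := by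
  have : (net.N j : ℝ) ≠ 0 := by linarith [net.two_le_N_cast j]
  rw [hh]
  field_simp

theorem h_mul_Dp (k : ℕ) :
    net.h j * net.Dp U j k = U j (k + 1) - U j k :=
  mul_div_cancel₀ _ (net.h_pos j).ne'

theorem sum_h_mul_Dp (n : ℕ) :
    ∑ k ∈ range n, net.h j * net.Dp U j k = U j n - U j 0 := by
  simp only [h_mul_Dp]
  exact sum_range_sub (U j) n

theorem D2_eq_sub_div {k : ℕ} (hk : 1 ≤ k) :
    net.D2 U j k = (net.Dp U j k - net.Dp U j (k - 1)) / net.h j := by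
  obtain ⟨k, rfl⟩ := Nat.exists_eq_add_of_le' hk
  have := (net.h_pos j).ne'
  simp only [D2, Dp, Nat.add_sub_cancel]
  field_simp
  ring

theorem sum_h_mul_mean_slope :
    ∑ _k ∈ range (net.N j), net.h j * ((U j (net.N j) - U j 0) / (net.N j * net.h j)) =
      U j (net.N j) - U j 0 := by
  have : (net.N j : ℝ) ≠ 0 := by linarith [net.two_le_N_cast j]
  have := (net.h_pos j).ne'
  rw [sum_const, card_range, nsmul_eq_mul]
  field_simp

theorem exists_Dp_le_mean_slope :
    ∃ m ≤ net.N j - 1, net.Dp U j m ≤ (U j (net.N j) - U j 0) / (net.N j * net.h j) := by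
  have hne : (range (net.N j)).Nonempty := nonempty_range_iff.mpr (by have := net.N_ge j; omega)
  obtain ⟨m, hm, hle⟩ := exists_le_of_sum_le hne
    ((net.sum_h_mul_Dp U j _).trans_le (net.sum_h_mul_mean_slope U j).ge)
  exact ⟨m, by rw [mem_range] at hm; omega, le_of_mul_le_mul_left hle (net.h_pos j)⟩

theorem exists_mean_slope_le_Dp :
    ∃ m ≤ net.N j - 1, (U j (net.N j) - U j 0) / (net.N j * net.h j) ≤ net.Dp U j m := by
  have hne : (range (net.N j)).Nonempty := nonempty_range_iff.mpr (by have := net.N_ge j; omega)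
  obtain ⟨m, hm, hle⟩ := exists_le_of_sum_le hne
    ((net.sum_h_mul_mean_slope U j).trans_le (net.sum_h_mul_Dp U j _).ge)
  exact ⟨m, by rw [mem_range] at hm; omega, le_of_mul_le_mul_left hle (net.h_pos j)⟩

variable {U j}

theorem neg_le_D2_of_G4 {g : ℝ × ℝ → ℝ} {α C₀' γ v C_V : ℝ} {k : ℕ} (hg : G4 g α C₀' γ)
    (hα : 0 ≤ α) (hv : v ≤ C_V) (hHJ : -net.nu j * net.D2 U j k + g (net.Dh U j k) = v) :
    -(max (C₀' + C_V) 0 / net.nu j) ≤ net.D2 U j k := by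
  rw [neg_le, le_div_iff₀ (net.nu_pos j)]
  linarith [hg.neg_le hα (net.Dh U j k), le_max_left (C₀' + C_V) 0]

theorem Dp_sub_Dp_le_of_neg_le_D2 {c : ℝ} {n : ℕ}
    (hD2 : ∀ k, 1 ≤ k → k ≤ n → -c ≤ net.D2 U j k) {m k : ℕ} (hmk : m ≤ k) (hkn : k ≤ n) :
    net.Dp U j m - net.Dp U j k ≤ ((k : ℝ) - m) * net.h j * c := by
  induction k, hmk using Nat.le_induction with
  | base => simp
  | succ k hmk ih =>
    have hstep : net.Dp U j k - net.Dp U j (k + 1) ≤ net.h j * c := by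
      have := hD2 (k + 1) (by omega) hkn
      rw [net.D2_eq_sub_div U j (by omega), Nat.add_sub_cancel,
        le_div_iff₀ (net.h_pos j)] at this
      linarith
    push_cast
    linarith [ih (by omega)]

theorem Dp_sub_Dp_le {c : ℝ} (hc : 0 ≤ c)
    (hD2 : ∀ k, 1 ≤ k → k ≤ net.N j - 1 → -c ≤ net.D2 U j k) {m k : ℕ} (hmk : m ≤ k)
    (hk : k ≤ net.N j - 1) :
    net.Dp U j m - net.Dp U j k ≤ net.N j * net.h j * c := by
  have hkN : (k : ℝ) - m ≤ net.N j := by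
    have : (k : ℝ) ≤ net.N j := by exact_mod_cast hk.trans (Nat.sub_le _ _)
    linarith [(m.cast_nonneg : (0 : ℝ) ≤ m)]
  exact (net.Dp_sub_Dp_le_of_neg_le_D2 hD2 hmk hk).trans <|
    mul_le_mul_of_nonneg_right (mul_le_mul_of_nonneg_right hkN (net.h_pos j).le) hc

theorem Dp_zero_le {c : ℝ} (hc : 0 ≤ c)
    (hD2 : ∀ k, 1 ≤ k → k ≤ net.N j - 1 → -c ≤ net.D2 U j k) :
    net.Dp U j 0 ≤
      (U j (net.N j) - U j 0) / (net.N j * net.h j) + net.N j * net.h j * c := by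
  obtain ⟨m, hm, hle⟩ := net.exists_Dp_le_mean_slope U j
  linarith [net.Dp_sub_Dp_le hc hD2 (Nat.zero_le m) hm]

theorem le_Dp_last {c : ℝ} (hc : 0 ≤ c)
    (hD2 : ∀ k, 1 ≤ k → k ≤ net.N j - 1 → -c ≤ net.D2 U j k) :
    (U j (net.N j) - U j 0) / (net.N j * net.h j) - net.N j * net.h j * c ≤
      net.Dp U j (net.N j - 1) := by
  obtain ⟨m, hm, hle⟩ := net.exists_mean_slope_le_Dp U j
  linarith [net.Dp_sub_Dp_le hc hD2 hm le_rfl]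

theorem abs_mean_slope_le {C₀ : ℝ} (hU : ∀ k ≤ net.N j, |U j k| ≤ C₀) :
    |(U j (net.N j) - U j 0) / (net.N j * net.h j)| ≤ 2 * C₀ / (net.N j * net.h j) := by
  have hlen : (0 : ℝ) < net.N j * net.h j :=
    mul_pos (by linarith [net.two_le_N_cast j]) (net.h_pos j)
  rw [abs_div, abs_of_pos hlen]
  gcongr
  calc |U j (net.N j) - U j 0| ≤ |U j (net.N j)| + |U j 0| := abs_sub _ _
    _ ≤ 2 * C₀ := by linarith [hU _ le_rfl, hU 0 (Nat.zero_le _)]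

theorem abs_half_h_mul_le {V : J → ℕ → ℝ} {C_V : ℝ} (hV : ∀ k ≤ net.N j, |V j k| ≤ C_V)
    {k : ℕ} (hk : k ≤ net.N j) :
    |net.h j / 2 * V j k| ≤ net.N j * net.h j * C_V := by
  have hh := net.h_pos j
  have hC_V : 0 ≤ C_V := (abs_nonneg _).trans (hV k hk)
  rw [abs_mul, abs_of_pos (half_pos hh)]
  calc net.h j / 2 * |V j k| ≤ net.h j / 2 * C_V :=
        mul_le_mul_of_nonneg_left (hV k hk) (half_pos hh).le
    _ ≤ net.N j * net.h j * C_V :=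
        mul_le_mul_of_nonneg_right (by nlinarith [net.two_le_N_cast j]) hC_V

section Flux

variable {V : J → ℕ → ℝ} {c C₀ C_V : ℝ}

theorem flux_start_le (hc : 0 ≤ c)
    (hD2 : ∀ k, 1 ≤ k → k ≤ net.N j - 1 → -c ≤ net.D2 U j k)
    (hU : ∀ k ≤ net.N j, |U j k| ≤ C₀) (hV : ∀ k ≤ net.N j, |V j k| ≤ C_V) :
    net.nu j * net.Dp U j 0 + net.h j / 2 * V j 0 ≤
      net.nu j * (2 * C₀ / (net.N j * net.h j) + net.N j * net.h j * c) +
        net.N j * net.h j * C_V := by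
  have hmean := (abs_le.mp (net.abs_mean_slope_le hU)).2
  have hV0 := (abs_le.mp (net.abs_half_h_mul_le hV (Nat.zero_le _))).2
  have hfirst : net.Dp U j 0 ≤ 2 * C₀ / (net.N j * net.h j) + net.N j * net.h j * c := by
    linarith [net.Dp_zero_le hc hD2]
  linarith [mul_le_mul_of_nonneg_left hfirst (net.nu_pos j).le]

theorem flux_end_ge (hc : 0 ≤ c)
    (hD2 : ∀ k, 1 ≤ k → k ≤ net.N j - 1 → -c ≤ net.D2 U j k)
    (hU : ∀ k ≤ net.N j, |U j k| ≤ C₀) (hV : ∀ k ≤ net.N j, |V j k| ≤ C_V) :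
    -(net.nu j * (2 * C₀ / (net.N j * net.h j) + net.N j * net.h j * c) +
        net.N j * net.h j * C_V) ≤
      net.nu j * net.Dp U j (net.N j - 1) - net.h j / 2 * V j (net.N j) := by
  have hmean := (abs_le.mp (net.abs_mean_slope_le hU)).1
  have hVN := (abs_le.mp (net.abs_half_h_mul_le hV le_rfl)).2
  have hlast : -(2 * C₀ / (net.N j * net.h j)) - net.N j * net.h j * c ≤
      net.Dp U j (net.N j - 1) := by
    linarith [net.le_Dp_last hc hD2]
  linarith [mul_le_mul_of_nonneg_left hlast (net.nu_pos j).le]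

theorem abs_Dp_le_of_flux_bounds {F : ℝ} (hc : 0 ≤ c)
    (hD2 : ∀ k, 1 ≤ k → k ≤ net.N j - 1 → -c ≤ net.D2 U j k)
    (hV : ∀ k ≤ net.N j, |V j k| ≤ C_V)
    (hend : net.nu j * net.Dp U j (net.N j - 1) - net.h j / 2 * V j (net.N j) ≤ F)
    (hstart : -F ≤ net.nu j * net.Dp U j 0 + net.h j / 2 * V j 0) {k : ℕ}
    (hk : k ≤ net.N j - 1) :
    |net.Dp U j k| ≤ (F + net.N j * net.h j * C_V) / net.nu j + net.N j * net.h j * c := by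
  have hν := net.nu_pos j
  have hVN := abs_le.mp (net.abs_half_h_mul_le hV le_rfl)
  have hV0 := abs_le.mp (net.abs_half_h_mul_le hV (Nat.zero_le _))
  have hlast : net.Dp U j (net.N j - 1) ≤ (F + net.N j * net.h j * C_V) / net.nu j := by
    rw [le_div_iff₀ hν]
    linarith
  have hfirst : -((F + net.N j * net.h j * C_V) / net.nu j) ≤ net.Dp U j 0 := by
    rw [neg_le, le_div_iff₀ hν]
    linarith
  rw [abs_le]
  constructor
  · linarith [net.Dp_sub_Dp_le hc hD2 (Nat.zero_le k) hk]
  · linarith [net.Dp_sub_Dp_le hc hD2 hk le_rfl]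

variable [Fintype J] {G : J → ℝ}

theorem flux_end_le_of_S_eq_zero (hS : ∀ i, net.S U V i = 0) (hG : ∀ j, 0 ≤ G j)
    (hstart : ∀ j, net.nu j * net.Dp U j 0 + net.h j / 2 * V j 0 ≤ G j)
    (hend : ∀ j, -G j ≤ net.nu j * net.Dp U j (net.N j - 1) - net.h j / 2 * V j (net.N j)) :
    net.nu j * net.Dp U j (net.N j - 1) - net.h j / 2 * V j (net.N j) ≤ 2 * ∑ j, G j :=
  le_two_mul_sum_of_sum_ite_eq hG (fun j _ => hstart j) (fun j _ => hend j)
    (sub_eq_zero.mp (hS (net.b j))) rfl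

theorem flux_start_ge_of_S_eq_zero (hS : ∀ i, net.S U V i = 0) (hG : ∀ j, 0 ≤ G j)
    (hstart : ∀ j, net.nu j * net.Dp U j 0 + net.h j / 2 * V j 0 ≤ G j)
    (hend : ∀ j, -G j ≤ net.nu j * net.Dp U j (net.N j - 1) - net.h j / 2 * V j (net.N j)) :
    -(2 * ∑ j, G j) ≤ net.nu j * net.Dp U j 0 + net.h j / 2 * V j 0 :=
  neg_two_mul_sum_le_of_sum_ite_eq hG (fun j _ => hstart j) (fun j _ => hend j)
    (sub_eq_zero.mp (hS (net.a j))) rfl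

end Flux

end Net

theorem stmt_2_general {I J : Type} [Fintype J]
    (a b : J → I) (ν l : J → ℝ) (hl : ∀ j, 0 < l j)
    (α C₀' γ : ℝ) (hα : 0 < α)
    (C₀ C_V : ℝ) (hC₀ : 0 < C₀) (hCV : 0 < C_V) :
    ∃ C : ℝ, ∀ net : Net I J,
      net.a = a → net.b = b → net.nu = ν →
      (∀ j, 3 ≤ net.N j) → (∀ j, net.h j = l j / net.N j) →
      ∀ g : J → ℕ → ℝ × ℝ → ℝ,
        (∀ j k, 1 ≤ k → k ≤ net.N j - 1 → G1 (g j k)) →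
        (∀ j k, 1 ≤ k → k ≤ net.N j - 1 → ContDiff ℝ 1 (g j k)) →
        (∀ j k, 1 ≤ k → k ≤ net.N j - 1 → G4 (g j k) α C₀' γ) →
      ∀ V : J → ℕ → ℝ, net.Cont V →
        (∀ j k, k ≤ net.N j → |V j k| ≤ C_V) →
      ∀ U : J → ℕ → ℝ, net.Cont U →
        (∀ j k, 1 ≤ k → k ≤ net.N j - 1 →
          -net.nu j * net.D2 U j k + g j k (net.Dh U j k) = V j k) →
        (∀ i, net.S U V i = 0) →
        (∀ j k, k ≤ net.N j → |U j k| ≤ C₀) →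
        ∀ j k, k ≤ net.N j - 1 → |net.Dp U j k| ≤ C := by
  -- `c j` bounds `-D²_hU` on edge `j`, and `G j` bounds the fluxes at both of its ends.
  set c : J → ℝ := fun j => max (C₀' + C_V) 0 / ν j
  set G : J → ℝ := fun j => ν j * (2 * C₀ / l j + l j * c j) + l j * C_V
  refine ⟨∑ j, ((2 * ∑ j, G j + l j * C_V) / ν j + l j * c j), ?_⟩
  rintro net rfl rfl rfl - hh g - - hG4 V - hV U - hHJ hS hU j k hk
  have hlen : ∀ j, (net.N j : ℝ) * net.h j = l j := fun j => net.N_mul_h_eq j (hh j)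
  have hc : ∀ j, 0 ≤ c j := fun j => div_nonneg (le_max_right _ _) (net.nu_pos j).le
  have hD2 : ∀ j k, 1 ≤ k → k ≤ net.N j - 1 → -c j ≤ net.D2 U j k := fun j k hk₁ hk₂ =>
    net.neg_le_D2_of_G4 (hG4 j k hk₁ hk₂) hα.le (abs_le.mp (hV j k (by omega))).2
      (hHJ j k hk₁ hk₂)
  have hG : ∀ j, 0 ≤ G j := fun j =>
    add_nonneg (mul_nonneg (net.nu_pos j).le (add_nonneg (div_nonneg (by linarith) (hl j).le)
      (mul_nonneg (hl j).le (hc j)))) (mul_nonneg (hl j).le hCV.le)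
  have hstart : ∀ j, net.nu j * net.Dp U j 0 + net.h j / 2 * V j 0 ≤ G j := fun j => by
    simpa only [hlen] using net.flux_start_le (hc j) (hD2 j) (hU j) (hV j)
  have hend : ∀ j, -G j ≤
      net.nu j * net.Dp U j (net.N j - 1) - net.h j / 2 * V j (net.N j) := fun j => by
    simpa only [hlen] using net.flux_end_ge (hc j) (hD2 j) (hU j) (hV j)
  have hbound_nonneg : ∀ j, 0 ≤ (2 * ∑ j, G j + l j * C_V) / net.nu j + l j * c j := fun j =>
    add_nonneg (div_nonneg (add_nonneg (mul_nonneg zero_le_two (sum_nonneg fun j _ => hG j))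
      (mul_nonneg (hl j).le hCV.le)) (net.nu_pos j).le) (mul_nonneg (hl j).le (hc j))
  calc |net.Dp U j k| ≤ (2 * ∑ j, G j + l j * C_V) / net.nu j + l j * c j := by
        simpa only [hlen] using net.abs_Dp_le_of_flux_bounds (hc j) (hD2 j) (hV j)
          (net.flux_end_le_of_S_eq_zero hS hG hstart hend)
          (net.flux_start_ge_of_S_eq_zero hS hG hstart hend) hk
    _ ≤ _ := single_le_sum (fun j _ => hbound_nonneg j) (mem_univ j)

/-- A priori bound on the discrete gradient, uniform in the grid. -/
theorem stmt_2 {I J : Type} [Fintype I] [Fintype J] [Nonempty I] [Nonempty J]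
    (a b : J → I) (ν l : J → ℝ) (hν : ∀ j, 0 < ν j) (hl : ∀ j, 0 < l j)
    (α C₀' γ : ℝ) (hα : 0 < α) (hγ : 1 < γ)
    (C₀ C_V : ℝ) (hC₀ : 0 < C₀) (hCV : 0 < C_V) :
    ∃ C : ℝ, ∀ net : Net I J,
      net.a = a → net.b = b → net.nu = ν →
      (∀ j, 3 ≤ net.N j) → (∀ j, net.h j = l j / net.N j) →
      ∀ g : J → ℕ → ℝ × ℝ → ℝ,
        (∀ j k, 1 ≤ k → k ≤ net.N j - 1 → G1 (g j k)) →
        (∀ j k, 1 ≤ k → k ≤ net.N j - 1 → ContDiff ℝ 1 (g j k)) →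
        (∀ j k, 1 ≤ k → k ≤ net.N j - 1 → G4 (g j k) α C₀' γ) →
      ∀ V : J → ℕ → ℝ, net.Cont V →
        (∀ j k, k ≤ net.N j → |V j k| ≤ C_V) →
      ∀ U : J → ℕ → ℝ, net.Cont U →
        (∀ j k, 1 ≤ k → k ≤ net.N j - 1 →
          -net.nu j * net.D2 U j k + g j k (net.Dh U j k) = V j k) →
        (∀ i, net.S U V i = 0) →
        (∀ j k, k ≤ net.N j → |U j k| ≤ C₀) →
        ∀ j k, k ≤ net.N j - 1 → |net.Dp U j k| ≤ C :=
  stmt_2_general a b ν l hl α C₀' γ hα C₀ C_V hC₀ hCV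
end
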